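/- Suppose X ~ N(θ𝟙, Σ) in ℝ^G where θ ∈ ℝ is a scalar, 𝟙 the all-ones vector, and Σ positive definite. Among all weight vectors w with ∑_g w_g = 1, the one-sided test 1{wᵀX/√(wᵀΣw) > Φ^{-1}(1-C)} has rejection probability at θ = 0 equal to C for every such w, and its derivative of power with respect to θ at θ = 0 equals φ(Φ^{-1}(1-C))/√(wᵀΣw), which is maximized by the variance-minimizing weights w^s = Σ^{-1}𝟙/(𝟙ᵀΣ^{-1}𝟙). -/

import Mathlib

/-!
Under `N(0, v)` the statistic `x / √v` is standard normal, so the index test rejects with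
probability `1 - Φ(c) = C` at `θ = 0`, and its power `1 - Φ(c - θ / √v)` has derivative `φ(c) / √v`
there. Maximizing this means minimizing `v = wᵀ M w` subject to `∑ w = 1`: since `M wˢ` is a
multiple of `𝟙`, every admissible `w = wˢ + d` has `dᵀ M wˢ = 0`, so `wᵀ M w = wˢᵀ M wˢ + dᵀ M d`.
-/

open MeasureTheory ProbabilityTheory Matrix

/-- Standard normal density. -/
noncomputable def stdGaussianPDF (z : ℝ) : ℝ :=
  (Real.sqrt (2 * Real.pi))⁻¹ * Real.exp (-(z ^ 2) / 2)

/-- Standard normal CDF. -/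
noncomputable def stdGaussianCDF (z : ℝ) : ℝ :=
  ∫ t in Set.Iic z, stdGaussianPDF t

theorem stdGaussianPDF_eq_gaussianPDFReal : stdGaussianPDF = gaussianPDFReal 0 1 := by
  funext x
  simp [stdGaussianPDF, gaussianPDFReal, neg_div]

theorem integrable_stdGaussianPDF : Integrable stdGaussianPDF :=
  stdGaussianPDF_eq_gaussianPDFReal ▸ integrable_gaussianPDFReal 0 1

theorem continuous_stdGaussianPDF : Continuous stdGaussianPDF := by
  unfold stdGaussianPDF
  fun_prop

theorem stdGaussianPDF_nonneg (z : ℝ) : 0 ≤ stdGaussianPDF z := by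
  unfold stdGaussianPDF
  positivity

theorem integral_Ioi_stdGaussianPDF (c : ℝ) :
    ∫ t in Set.Ioi c, stdGaussianPDF t = 1 - stdGaussianCDF c := by
  have htotal : ∫ t, stdGaussianPDF t = 1 := by
    rw [stdGaussianPDF_eq_gaussianPDFReal]
    exact integral_gaussianPDFReal_eq_one 0 one_ne_zero
  rw [← htotal, ← intervalIntegral.integral_Iic_add_Ioi (b := c)
    integrable_stdGaussianPDF.integrableOn integrable_stdGaussianPDF.integrableOn,
    stdGaussianCDF, add_sub_cancel_left]

theorem hasDerivAt_stdGaussianCDF (z : ℝ) :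
    HasDerivAt stdGaussianCDF (stdGaussianPDF z) z := by
  have hCDF : stdGaussianCDF = fun u ↦ stdGaussianCDF 0 + ∫ t in (0 : ℝ)..u, stdGaussianPDF t := by
    funext u
    rw [← intervalIntegral.integral_Iic_sub_Iic integrable_stdGaussianPDF.integrableOn
      integrable_stdGaussianPDF.integrableOn, stdGaussianCDF, stdGaussianCDF, add_sub_cancel]
  rw [hCDF]
  exact (intervalIntegral.integral_hasDerivAt_right integrable_stdGaussianPDF.intervalIntegrable
    continuous_stdGaussianPDF.stronglyMeasurable.stronglyMeasurableAtFilter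
    continuous_stdGaussianPDF.continuousAt).const_add _

theorem gaussianReal_zero_one_Ioi (c : ℝ) :
    gaussianReal 0 1 (Set.Ioi c) = ENNReal.ofReal (1 - stdGaussianCDF c) := by
  rw [gaussianReal_apply_eq_integral 0 one_ne_zero, ← stdGaussianPDF_eq_gaussianPDFReal,
    integral_Ioi_stdGaussianPDF]

theorem gaussianReal_setOf_lt_div_sqrt {v : ℝ} (hv : 0 < v) (c : ℝ) :
    gaussianReal 0 v.toNNReal {x | c < x / √v} = gaussianReal 0 1 (Set.Ioi c) := by
  have hstd : (gaussianReal 0 v.toNNReal).map (· / √v) = gaussianReal 0 1 := by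
    rw [gaussianReal_map_div_const, zero_div]
    congr
    ext
    simp [Real.sq_sqrt hv.le, hv.le, hv.ne']
  rw [← hstd, Measure.map_apply (by fun_prop) measurableSet_Ioi]
  rfl

theorem hasDerivAt_one_sub_stdGaussianCDF_sub_div (c s θ : ℝ) :
    HasDerivAt (fun θ ↦ 1 - stdGaussianCDF (c - θ / s)) (stdGaussianPDF (c - θ / s) / s) θ := by
  refine (((hasDerivAt_stdGaussianCDF (c - θ / s)).comp θ
    (((hasDerivAt_id θ).div_const s).const_sub c)).const_sub 1).congr_deriv ?_
  ring

section MinimumVariance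

variable {ι : Type*} [Fintype ι] {M : Matrix ι ι ℝ}

theorem nonempty_of_sum_eq_one {w : ι → ℝ} (hw : ∑ i, w i = 1) : Nonempty ι :=
  Finset.univ_nonempty_iff.mp (Finset.nonempty_of_sum_ne_zero (hw ▸ one_ne_zero))

theorem Matrix.PosDef.dotProduct_mulVec_pos_of_sum_eq_one (hM : M.PosDef) {w : ι → ℝ}
    (hw : ∑ i, w i = 1) : 0 < w ⬝ᵥ M *ᵥ w := by
  refine hM.dotProduct_mulVec_pos fun h ↦ ?_
  simp [h] at hw

theorem Matrix.IsSymm.dotProduct_mulVec_comm {R : Type*} [CommSemiring R] {A : Matrix ι ι R}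
    (hA : A.IsSymm) (x y : ι → R) : x ⬝ᵥ A *ᵥ y = y ⬝ᵥ A *ᵥ x := by
  rw [dotProduct_mulVec, ← mulVec_transpose, hA.eq, dotProduct_comm]

variable [DecidableEq ι]

noncomputable def minVarWeights (M : Matrix ι ι ℝ) : ι → ℝ :=
  fun i ↦ (M⁻¹ *ᵥ 1) i / (1 ⬝ᵥ M⁻¹ *ᵥ 1)

theorem dotProduct_mulVec_minVarWeights (hM : M.PosDef) (x : ι → ℝ) :
    x ⬝ᵥ M *ᵥ minVarWeights M = (∑ i, x i) / (1 ⬝ᵥ M⁻¹ *ᵥ 1) := by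
  have hws : minVarWeights M = (1 ⬝ᵥ M⁻¹ *ᵥ 1)⁻¹ • M⁻¹ *ᵥ 1 := by
    funext i
    simp [minVarWeights, div_eq_inv_mul]
  rw [hws, mulVec_smul, mulVec_mulVec, mul_nonsing_inv _ (M.isUnit_iff_isUnit_det.mp hM.isUnit),
    one_mulVec, dotProduct_smul, dotProduct_one, smul_eq_mul, inv_mul_eq_div]

theorem sum_minVarWeights [Nonempty ι] (hM : M.PosDef) : ∑ i, minVarWeights M i = 1 := by
  have hpos : 0 < 1 ⬝ᵥ M⁻¹ *ᵥ 1 := hM.inv.dotProduct_mulVec_pos one_ne_zero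
  simp only [minVarWeights]
  rw [← Finset.sum_div, ← one_dotProduct, div_self hpos.ne']

theorem dotProduct_mulVec_minVarWeights_le (hM : M.PosDef) {w : ι → ℝ} (hw : ∑ i, w i = 1) :
    minVarWeights M ⬝ᵥ M *ᵥ minVarWeights M ≤ w ⬝ᵥ M *ᵥ w := by
  have : Nonempty ι := nonempty_of_sum_eq_one hw
  have hsum := sum_minVarWeights hM
  set ws := minVarWeights M
  obtain ⟨d, rfl⟩ : ∃ d, w = ws + d := ⟨w - ws, (add_sub_cancel ws w).symm⟩
  have hd : ∑ i, d i = 0 := by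
    simpa [Finset.sum_add_distrib, hsum] using hw
  have horth : d ⬝ᵥ M *ᵥ ws = 0 := by
    rw [dotProduct_mulVec_minVarWeights hM, hd, zero_div]
  calc ws ⬝ᵥ M *ᵥ ws
      ≤ ws ⬝ᵥ M *ᵥ ws + d ⬝ᵥ M *ᵥ d :=
        le_add_of_nonneg_right (hM.posSemidef.dotProduct_mulVec_nonneg d)
    _ = (ws + d) ⬝ᵥ M *ᵥ (ws + d) := by
        rw [mulVec_add, dotProduct_add, add_dotProduct, add_dotProduct,
          (isHermitian_iff_isSymm.mp hM.isHermitian).dotProduct_mulVec_comm ws d, horth]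
        ring

end MinimumVariance

theorem index_test_local_power_general (G : ℕ)
    (M : Matrix (Fin G) (Fin G) ℝ) (hM : M.PosDef)
    (C : ℝ)
    (c : ℝ) (hc : stdGaussianCDF c = 1 - C) :
    let one : Fin G → ℝ := fun _ => 1
    let ws : Fin G → ℝ := fun i => M⁻¹.mulVec one i / (one ⬝ᵥ M⁻¹.mulVec one)
    (∀ w : Fin G → ℝ, ∑ g, w g = 1 →
      gaussianReal 0 (w ⬝ᵥ M.mulVec w).toNNReal
          {x | c < x / Real.sqrt (w ⬝ᵥ M.mulVec w)} = ENNReal.ofReal C) ∧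
    (∀ w : Fin G → ℝ, ∑ g, w g = 1 →
      HasDerivAt (fun θ : ℝ => 1 - stdGaussianCDF (c - θ / Real.sqrt (w ⬝ᵥ M.mulVec w)))
        (stdGaussianPDF c / Real.sqrt (w ⬝ᵥ M.mulVec w)) 0) ∧
    (∀ w : Fin G → ℝ, ∑ g, w g = 1 →
      stdGaussianPDF c / Real.sqrt (w ⬝ᵥ M.mulVec w) ≤
        stdGaussianPDF c / Real.sqrt (ws ⬝ᵥ M.mulVec ws)) := by
  refine ⟨fun w hw ↦ ?_, fun w _ ↦ ?_, fun w hw ↦ ?_⟩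
  · rw [gaussianReal_setOf_lt_div_sqrt (hM.dotProduct_mulVec_pos_of_sum_eq_one hw),
      gaussianReal_zero_one_Ioi, hc, sub_sub_cancel]
  · simpa using hasDerivAt_one_sub_stdGaussianCDF_sub_div c √(w ⬝ᵥ M *ᵥ w) 0
  · have : Nonempty (Fin G) := nonempty_of_sum_eq_one hw
    have hvar : 0 < minVarWeights M ⬝ᵥ M *ᵥ minVarWeights M :=
      hM.dotProduct_mulVec_pos_of_sum_eq_one (sum_minVarWeights hM)
    exact div_le_div_of_nonneg_left (stdGaussianPDF_nonneg c) (Real.sqrt_pos.mpr hvar)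
      (Real.sqrt_le_sqrt (dotProduct_mulVec_minVarWeights_le hM hw))

/-- Under the common-parameter model `X ~ N(θ𝟙, Σ)`, every index test with weights
summing to one is similar at `θ = 0` with size `C`; its local power (derivative of
power at `θ = 0`) is `φ(c)/√(wᵀΣw)`, which is maximized by the variance-minimizing
weights `wˢ = Σ⁻¹𝟙/(𝟙ᵀΣ⁻¹𝟙)`. -/
theorem index_test_local_power (G : ℕ) (hG : 0 < G)
    (M : Matrix (Fin G) (Fin G) ℝ) (hM : M.PosDef)
    (C : ℝ) (hC0 : 0 < C) (hC1 : C < 1)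
    (c : ℝ) (hc : stdGaussianCDF c = 1 - C) :
    let one : Fin G → ℝ := fun _ => 1
    let ws : Fin G → ℝ := fun i => M⁻¹.mulVec one i / (one ⬝ᵥ M⁻¹.mulVec one)
    (∀ w : Fin G → ℝ, ∑ g, w g = 1 →
      gaussianReal 0 (w ⬝ᵥ M.mulVec w).toNNReal
          {x | c < x / Real.sqrt (w ⬝ᵥ M.mulVec w)} = ENNReal.ofReal C) ∧
    (∀ w : Fin G → ℝ, ∑ g, w g = 1 →
      HasDerivAt (fun θ : ℝ => 1 - stdGaussianCDF (c - θ / Real.sqrt (w ⬝ᵥ M.mulVec w)))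
        (stdGaussianPDF c / Real.sqrt (w ⬝ᵥ M.mulVec w)) 0) ∧
    (∀ w : Fin G → ℝ, ∑ g, w g = 1 →
      stdGaussianPDF c / Real.sqrt (w ⬝ᵥ M.mulVec w) ≤
        stdGaussianPDF c / Real.sqrt (ws ⬝ᵥ M.mulVec ws)) :=
  index_test_local_power_general G M hM C c hc
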